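/- arXiv:2307.16234 — 2 statements merged into one kernel-verified Lean document; each statement's English description precedes it below -/
import Mathlib

section
/- Suppose x ∈ 𝓞_K satisfies |N(x)| = p for a prime number p, and x divides ζ − ξ in 𝓞_K for some integer ξ. Then ξ^λ ≡ 1 (mod p). -/
open NumberField

noncomputable instance (n : ℕ+) : NumberField (CyclotomicField n ℚ) :=
  inferInstance

theorem sub_dvd_one_sub_pow_of_pow_eq_one {R : Type*} [CommRing R] {ζ : R} {n : ℕ}
    (hζ : ζ ^ n = 1) (c : R) : ζ - c ∣ 1 - c ^ n := by
  simpa only [hζ] using sub_dvd_pow_sub_pow ζ c n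

theorem Algebra.norm_dvd_pow_finrank_of_dvd_algebraMap {R S : Type*} [CommRing R] [CommRing S]
    [Algebra R S] [Module.Free R S] {x : S} {a : R} (h : x ∣ algebraMap R S a) :
    Algebra.norm R x ∣ a ^ Module.finrank R S := by
  simpa only [Algebra.norm_algebraMap] using map_dvd (Algebra.norm R) h

theorem Int.dvd_of_dvd_intCast_of_natAbs_norm_eq_prime {S : Type*} [CommRing S]
    [Module.Free ℤ S] {x : S} {p : ℕ} (hp : p.Prime) (hx : (Algebra.norm ℤ x).natAbs = p)
    {a : ℤ} (h : x ∣ (a : S)) : (p : ℤ) ∣ a := by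
  have hnorm : Algebra.norm ℤ x ∣ a ^ Module.finrank ℤ S :=
    Algebra.norm_dvd_pow_finrank_of_dvd_algebraMap (by rwa [algebraMap_int_eq, eq_intCast])
  exact (Nat.prime_iff_prime_int.mp hp).dvd_of_dvd_pow (hx ▸ Int.natAbs_dvd.mpr hnorm)

theorem pow_congr_one_of_dvd_zeta_sub_general (l : ℕ+)
    (ζ : 𝓞 (CyclotomicField l ℚ)) (hζ : IsPrimitiveRoot ζ l)
    (p : ℕ) (hp : p.Prime)
    (x : 𝓞 (CyclotomicField l ℚ))
    (hx : (Algebra.norm ℤ x).natAbs = p)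
    (ξ : ℤ) (hdvd : x ∣ ζ - (ξ : 𝓞 (CyclotomicField l ℚ))) :
    ξ ^ (l : ℕ) ≡ 1 [ZMOD (p : ℤ)] := by
  have hx_dvd : x ∣ ((1 - ξ ^ (l : ℕ) : ℤ) : 𝓞 (CyclotomicField l ℚ)) := by
    push_cast
    exact hdvd.trans (sub_dvd_one_sub_pow_of_pow_eq_one hζ.pow_eq_one _)
  exact Int.modEq_iff_dvd.mpr (Int.dvd_of_dvd_intCast_of_natAbs_norm_eq_prime hp hx hx_dvd)

/-- If `x` has prime norm `p` and divides `ζ - ξ`, then `ξ ^ λ ≡ 1 (mod p)`. -/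
theorem pow_congr_one_of_dvd_zeta_sub (l : ℕ+) (hl : (l : ℕ).Prime)
    (ζ : 𝓞 (CyclotomicField l ℚ)) (hζ : IsPrimitiveRoot ζ l)
    (p : ℕ) (hp : p.Prime)
    (x : 𝓞 (CyclotomicField l ℚ))
    (hx : (Algebra.norm ℤ x).natAbs = p)
    (ξ : ℤ) (hdvd : x ∣ ζ - (ξ : 𝓞 (CyclotomicField l ℚ))) :
    ξ ^ (l : ℕ) ≡ 1 [ZMOD (p : ℤ)] :=
  pow_congr_one_of_dvd_zeta_sub_general l ζ hζ p hp x hx ξ hdvd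
end

section
/- Let λ and q be distinct prime numbers, let f be the multiplicative order of q modulo λ (the order of the class of q in the unit group (ℤ/λℤ)ˣ), and let e = (λ−1)/f. Then in the ring of integers 𝓞_K of the λ-th cyclotomic field, any factorization of q into non-units has at most e factors: if q = x₁ · x₂ ⋯ x_k in 𝓞_K with no x_i a unit, then k ≤ e. -/
open NumberField

/-!
A non-unit factor `x` of `q` lies in a maximal ideal `P` above `q`, whose residue degree is the
order `f` of `q` modulo `λ`; hence `q ^ f = N(P)` divides `N(x)`. Multiplying over the `k`
factors, `q ^ (k * f)` divides `N(q) = q ^ (λ - 1)`.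
-/

open Ideal

section

variable {R : Type*} [CommRing R] [IsDedekindDomain R] [Module.Free ℤ R] [Module.Finite ℤ R]

theorem Ideal.pow_dvd_absNorm_span_singleton_of_dvd_natCast {p f : ℕ} (hp : p.Prime)
    (hf : ∀ P ∈ (span {(p : ℤ)}).primesOver R, f ≤ P.inertiaDeg ℤ)
    {x : R} (hx : x ∣ (p : R)) (hxu : ¬ IsUnit x) :
    p ^ f ∣ absNorm (span {x}) := by
  obtain ⟨P, hPmax, hxP⟩ := exists_le_maximal _ (mt span_singleton_eq_top.mp hxu)
  have hpP : algebraMap ℤ R p ∈ P := hxP (by simpa [mem_span_singleton] using hx)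
  have : P.LiesOver (span {(p : ℤ)}) :=
    (liesOver_span_iff hPmax.ne_top (Nat.prime_iff_prime_int.mp hp)).mpr hpP
  calc p ^ f ∣ p ^ P.inertiaDeg ℤ := pow_dvd_pow p (hf P ⟨hPmax.isPrime, this⟩)
    _ = absNorm P := pow_inertiaDeg p P
    _ ∣ absNorm (span {x}) := absNorm_dvd_absNorm_of_le hxP

theorem Ideal.card_mul_le_finrank_of_prod_eq_natCast {ι : Type*} [Fintype ι] {p f : ℕ}
    (hp : p.Prime) (hf : ∀ P ∈ (span {(p : ℤ)}).primesOver R, f ≤ P.inertiaDeg ℤ)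
    (x : ι → R) (hprod : (p : R) = ∏ i, x i) (hnu : ∀ i, ¬ IsUnit (x i)) :
    Fintype.card ι * f ≤ Module.finrank ℤ R := by
  have hdvd : p ^ (Fintype.card ι * f) ∣ p ^ Module.finrank ℤ R :=
    calc p ^ (Fintype.card ι * f) = ∏ _i : ι, p ^ f := by
          rw [Finset.prod_const, Finset.card_univ, pow_mul']
      _ ∣ ∏ i, absNorm (span {x i}) := Finset.prod_dvd_prod_of_dvd _ _ fun i _ ↦
          pow_dvd_absNorm_span_singleton_of_dvd_natCast hp hf
            (hprod ▸ Finset.dvd_prod_of_mem x (Finset.mem_univ i)) (hnu i)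
      _ = p ^ Module.finrank ℤ R := by
          rw [← map_prod, prod_span_singleton, ← hprod, absNorm_span_natCast]
  exact (Nat.pow_dvd_pow_iff_le_right hp.one_lt).mp hdvd

end

theorem IsCyclotomicExtension.Rat.finrank_ringOfIntegers_of_prime (l : ℕ) [Fact l.Prime]
    (K : Type*) [Field K] [NumberField K] [IsCyclotomicExtension {l} ℚ K] :
    Module.finrank ℤ (𝓞 K) = l - 1 := by
  rw [RingOfIntegers.rank, IsCyclotomicExtension.Rat.finrank l K, Nat.totient_prime Fact.out]

/-- Kummer's bound: if `q` is a prime distinct from `λ` whose class modulo `λ` has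
multiplicative order `f`, and `e = (λ - 1) / f`, then any factorization of `q` into
non-units in the ring of integers of the `λ`-th cyclotomic field has at most `e` factors. -/
theorem factorization_card_le (l : ℕ+) (hl : (l : ℕ).Prime)
    (q : ℕ) (hq : q.Prime) (hql : q ≠ (l : ℕ))
    (u : (ZMod (l : ℕ))ˣ) (hu : (u : ZMod (l : ℕ)) = (q : ZMod (l : ℕ)))
    (f e : ℕ) (hf : orderOf u = f) (he : e = ((l : ℕ) - 1) / f)
    (k : ℕ) (x : Fin k → 𝓞 (CyclotomicField l ℚ))
    (hprod : (q : 𝓞 (CyclotomicField l ℚ)) = ∏ i, x i)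
    (hnu : ∀ i, ¬ IsUnit (x i)) :
    k ≤ e := by
  have : Fact q.Prime := ⟨hq⟩
  have : Fact (l : ℕ).Prime := ⟨hl⟩
  have : IsCyclotomicExtension {(l : ℕ)} ℚ (CyclotomicField l ℚ) :=
    CyclotomicField.isCyclotomicExtension _ _
  have hqf : orderOf (q : ZMod l) = f := by rw [← hu, orderOf_units, hf]
  have hq_not_dvd : ¬ q ∣ l := fun h ↦ hql ((Nat.prime_dvd_prime_iff_eq hq hl).mp h)
  have hinertia : ∀ P ∈ (span {(q : ℤ)}).primesOver (𝓞 (CyclotomicField l ℚ)),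
      f ≤ P.inertiaDeg ℤ := fun P ⟨_, _⟩ ↦
    ((IsCyclotomicExtension.Rat.inertiaDeg_eq_of_not_dvd q _ P hq_not_dvd).trans hqf).ge
  have hkf := card_mul_le_finrank_of_prod_eq_natCast hq hinertia x hprod hnu
  rw [Fintype.card_fin, IsCyclotomicExtension.Rat.finrank_ringOfIntegers_of_prime l] at hkf
  exact he ▸ (Nat.le_div_iff_mul_le (hf ▸ orderOf_pos u)).mpr hkf
end
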